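/- Consider the 6×7 block matrix 𝒪 with block rows (A₁, A₂, 0, 0), (−M, 0, v, 0), (c·v·wᵀ, 0, J v·ω̄ₛ, d·v), where A₂ and M are invertible 2×2 matrices, v ∈ ℝ² nonzero, w ∈ ℝ², c, d ∈ ℝ with d ≠ 0. If ω̄ₛ = 0 then rank 𝒪 ≤ 5 (the matrix is not full row rank 6). -/
import Mathlib


open Matrix

@[simp] lemma cons_val_five' {α : Type*} {m : ℕ} (x : α) (u : Fin (m+5) → α) :
    Matrix.vecCons x u 5 = Matrix.vecHead (Matrix.vecTail (Matrix.vecTail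
      (Matrix.vecTail (Matrix.vecTail u)))) :=
  rfl

theorem stmt_13
    (J : Matrix (Fin 2) (Fin 2) ℝ) (hJ : J = !![0, -1; 1, 0])
    (A1 A2 M : Matrix (Fin 2) (Fin 2) ℝ)
    (hA2 : IsUnit A2) (hM : IsUnit M)
    (v w : Fin 2 → ℝ) (hv : v ≠ 0)
    (c d : ℝ) (hd : d ≠ 0)
    (ws : ℝ)
    (O : Matrix (Fin 6) (Fin 6) ℝ)
    (hO : O = Matrix.of
      ![![A1 0 0, A1 0 1, A2 0 0, A2 0 1, 0, 0],
        ![A1 1 0, A1 1 1, A2 1 0, A2 1 1, 0, 0],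
        ![-M 0 0, -M 0 1, 0, 0, v 0, 0],
        ![-M 1 0, -M 1 1, 0, 0, v 1, 0],
        ![c * v 0 * w 0, c * v 0 * w 1, 0, 0, (J.mulVec v 0) * ws, d * v 0],
        ![c * v 1 * w 0, c * v 1 * w 1, 0, 0, (J.mulVec v 1) * ws, d * v 1]])
    (hws : ws = 0) :
    O.rank ≤ 5 := by
  have hdet : O.det = 0 := by
    rw [← Matrix.exists_vecMul_eq_zero_iff]
    refine ⟨![0, 0, 0, 0, v 1, -(v 0)], ?_, ?_⟩
    · intro h
      apply hv
      funext i
      fin_cases i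
      · have h5 : -(v 0) = 0 := congrFun h 5
        simpa using neg_eq_zero.mp h5
      · have h4 : v 1 = 0 := congrFun h 4
        simpa using h4
    · funext j
      subst hO hws
      fin_cases j <;>
        simp [Matrix.vecMul, dotProduct, Fin.sum_univ_six, Matrix.vecHead,
          Matrix.vecTail] <;> ring
  obtain ⟨u, hu, huO⟩ := (Matrix.exists_mulVec_eq_zero_iff).mpr hdet
  have hker : u ∈ LinearMap.ker O.mulVecLin := by
    simpa [Matrix.mulVecLin] using huO
  have hk1 : 1 ≤ Module.finrank ℝ (LinearMap.ker O.mulVecLin) := by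
    have : LinearMap.ker O.mulVecLin ≠ ⊥ := by
      intro h
      exact hu (by simpa [h] using hker)
    have := Submodule.nontrivial_iff_ne_bot.mpr this
    exact Module.finrank_pos
  have hrn := LinearMap.finrank_range_add_finrank_ker O.mulVecLin
  have hdim : Module.finrank ℝ (Fin 6 → ℝ) = 6 := by simp
  rw [hdim] at hrn
  have : O.rank + 1 ≤ 6 := by
    unfold Matrix.rank
    omega
  omega
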